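/- arXiv:1909.08215 — 5 statements merged into one kernel-verified Lean document; each statement's English description precedes it below -/
import Mathlib

section
/- Let V and Q be real inner product spaces, let b : V → Q → ℝ be a bilinear map, let F : ℝ → Q, and let v : ℝ → V and p : ℝ → Q be functions that are differentiable at a time t with derivatives v'(t) and p'(t). Suppose that ⟨v'(t), w⟩ = b(w, p(t)) for all w ∈ V, and that ⟨p'(t), q⟩ + b(v(t), q) = ⟨F(t), q⟩ for all q ∈ Q. Then the energy function t ↦ ‖v(t)‖² + ‖p(t)‖² is differentiable at t with derivative equal to 2⟨F(t), p(t)⟩. -/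
open RealInnerProductSpace

/-!
Differentiating the energy gives `2⟪v, v'⟫ + 2⟪p, p'⟫`. Testing the velocity equation with
`w = v` and the pressure equation with `q = p` turns this into
`2 b(v, p) + 2(⟪F, p⟫ - b(v, p))`: the coupling terms cancel and only the source remains.
-/

theorem inner_rate_add_inner_rate_eq_inner_source
    {V Q : Type*} [NormedAddCommGroup V] [InnerProductSpace ℝ V]
    [NormedAddCommGroup Q] [InnerProductSpace ℝ Q]
    (b : V →ₗ[ℝ] Q →ₗ[ℝ] ℝ) {x x' : V} {y y' f : Q}
    (hx : ∀ w : V, ⟪x', w⟫ = b w y) (hy : ∀ q : Q, ⟪y', q⟫ + b x q = ⟪f, q⟫) :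
    ⟪x, x'⟫ + ⟪y, y'⟫ = ⟪f, y⟫ := by
  have hxx : ⟪x, x'⟫ = b x y := by rw [real_inner_comm, hx x]
  have hyy : ⟪y, y'⟫ = ⟪f, y⟫ - b x y := by rw [real_inner_comm, ← hy y]; ring
  rw [hxx, hyy]
  ring

/-- Abstract energy identity for the mixed Galerkin formulation of the wave
equation: if `⟪v', w⟫ = b w (p t)` for all `w` and `⟪p', q⟫ + b (v t) q = ⟪F t, q⟫`
for all `q`, then the energy `‖v‖² + ‖p‖²` has derivative `2⟪F t, p t⟫` at `t`. -/
theorem stmt_0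
    {V Q : Type*} [NormedAddCommGroup V] [InnerProductSpace ℝ V]
    [NormedAddCommGroup Q] [InnerProductSpace ℝ Q]
    (b : V →ₗ[ℝ] Q →ₗ[ℝ] ℝ) (F : ℝ → Q)
    (v : ℝ → V) (p : ℝ → Q) (t : ℝ) (v' : V) (p' : Q)
    (hv : HasDerivAt v v' t) (hp : HasDerivAt p p' t)
    (h1 : ∀ w : V, ⟪v', w⟫ = b w (p t))
    (h2 : ∀ q : Q, ⟪p', q⟫ + b (v t) q = ⟪F t, q⟫) :
    HasDerivAt (fun s => ‖v s‖ ^ 2 + ‖p s‖ ^ 2) (2 * ⟪F t, p t⟫) t := by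
  have hcancel := inner_rate_add_inner_rate_eq_inner_source b h1 h2
  refine (hv.norm_sq.add hp.norm_sq).congr_deriv ?_
  rw [← hcancel]
  ring
end

section
/- Let V and Q be real inner product spaces, let b : V → Q → ℝ be a bilinear map, let T > 0, and let v : ℝ → V and p : ℝ → Q be differentiable on [0, T] with derivatives v'(t) and p'(t). Suppose that for every t ∈ [0, T], ⟨v'(t), w⟩ = b(w, p(t)) for all w ∈ V and ⟨p'(t), q⟩ + b(v(t), q) = 0 for all q ∈ Q (i.e., the source term vanishes identically). Then the energy t ↦ ‖v(t)‖² + ‖p(t)‖² is constant on [0, T]; in particular ‖v(t)‖² + ‖p(t)‖² = ‖v(0)‖² + ‖p(0)‖² for all t ∈ [0, T]. -/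
open RealInnerProductSpace

/-- Energy conservation for the source-free mixed wave system: if
`⟪v'(t), w⟫ = b w (p t)` and `⟪p'(t), q⟫ + b (v t) q = 0` on `[0, T]`, then
the energy `‖v‖² + ‖p‖²` is constant on `[0, T]`. -/
theorem stmt_1
    {V Q : Type*} [NormedAddCommGroup V] [InnerProductSpace ℝ V]
    [NormedAddCommGroup Q] [InnerProductSpace ℝ Q]
    (b : V →ₗ[ℝ] Q →ₗ[ℝ] ℝ) (T : ℝ) (hT : 0 < T)
    (v : ℝ → V) (p : ℝ → Q) (v' : ℝ → V) (p' : ℝ → Q)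
    (hv : ∀ t ∈ Set.Icc (0 : ℝ) T, HasDerivWithinAt v (v' t) (Set.Icc 0 T) t)
    (hp : ∀ t ∈ Set.Icc (0 : ℝ) T, HasDerivWithinAt p (p' t) (Set.Icc 0 T) t)
    (h1 : ∀ t ∈ Set.Icc (0 : ℝ) T, ∀ w : V, ⟪v' t, w⟫ = b w (p t))
    (h2 : ∀ t ∈ Set.Icc (0 : ℝ) T, ∀ q : Q, ⟪p' t, q⟫ + b (v t) q = 0) :
    ∀ t ∈ Set.Icc (0 : ℝ) T, ‖v t‖ ^ 2 + ‖p t‖ ^ 2 = ‖v 0‖ ^ 2 + ‖p 0‖ ^ 2 := by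
  set E : ℝ → ℝ := fun t => ⟪v t, v t⟫ + ⟪p t, p t⟫ with hE
  have hderiv : ∀ t ∈ Set.Icc (0 : ℝ) T,
      HasDerivWithinAt E 0 (Set.Icc 0 T) t := by
    intro t ht
    have hd := ((hv t ht).inner ℝ (hv t ht)).add ((hp t ht).inner ℝ (hp t ht))
    have key : (⟪v t, v' t⟫ + ⟪v' t, v t⟫) + (⟪p t, p' t⟫ + ⟪p' t, p t⟫) = 0 := by
      have e1 : ⟪v' t, v t⟫ = b (v t) (p t) := h1 t ht (v t)
      have e2 : ⟪p' t, p t⟫ + b (v t) (p t) = 0 := h2 t ht (p t)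
      have c1 : ⟪v t, v' t⟫ = ⟪v' t, v t⟫ := real_inner_comm _ _
      have c2 : ⟪p t, p' t⟫ = ⟪p' t, p t⟫ := real_inner_comm _ _
      linarith
    rwa [key] at hd
  have hud : UniqueDiffOn ℝ (Set.Icc (0 : ℝ) T) := uniqueDiffOn_Icc hT
  have hconst : ∀ t ∈ Set.Icc (0 : ℝ) T, E t = E 0 := by
    apply constant_of_derivWithin_zero
    · exact fun t ht => ⟨_, (hderiv t ht).hasFDerivWithinAt⟩
    · intro t ht
      exact (hderiv t (Set.mem_Icc_of_Ico ht)).derivWithin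
        (hud t (Set.mem_Icc_of_Ico ht))
  intro t ht
  have := hconst t ht
  simp only [hE, real_inner_self_eq_norm_sq] at this
  linarith
end

section
/- Let H₁ and H₂ be real inner product spaces, let T > 0, let v : ℝ → H₁ and p : ℝ → H₂ be continuous on [0, T] and differentiable on [0, T] with derivatives v'(t) and p'(t), and let F : ℝ → H₂ be continuous on [0, T]. Suppose that for every t ∈ [0, T], ⟨v'(t), v(t)⟩ + ⟨p'(t), p(t)⟩ ≤ ‖F(t)‖ · ‖p(t)‖. Then the supremum over t ∈ [0, T] of ‖v(t)‖² + ‖p(t)‖² is at most 4 · ( ‖v(0)‖² + ‖p(0)‖² + (∫₀ᵀ ‖F(t)‖ dt)² ). -/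
open RealInnerProductSpace

/-- Stability estimate for the mixed wave system: if
`⟪v', v⟫ + ⟪p', p⟫ ≤ ‖F t‖ ‖p t‖` on `[0, T]`, then
`sup_{[0,T]} (‖v‖² + ‖p‖²) ≤ 4 (‖v 0‖² + ‖p 0‖² + (∫₀ᵀ ‖F‖)²)`. -/
theorem stmt_4
    {H₁ H₂ : Type*} [NormedAddCommGroup H₁] [InnerProductSpace ℝ H₁]
    [NormedAddCommGroup H₂] [InnerProductSpace ℝ H₂]
    (T : ℝ) (hT : 0 < T)
    (v : ℝ → H₁) (p : ℝ → H₂) (v' : ℝ → H₁) (p' : ℝ → H₂) (F : ℝ → H₂)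
    (hvc : ContinuousOn v (Set.Icc 0 T)) (hpc : ContinuousOn p (Set.Icc 0 T))
    (hv : ∀ t ∈ Set.Icc (0 : ℝ) T, HasDerivWithinAt v (v' t) (Set.Icc 0 T) t)
    (hp : ∀ t ∈ Set.Icc (0 : ℝ) T, HasDerivWithinAt p (p' t) (Set.Icc 0 T) t)
    (hFc : ContinuousOn F (Set.Icc 0 T))
    (hineq : ∀ t ∈ Set.Icc (0 : ℝ) T,
      ⟪v' t, v t⟫ + ⟪p' t, p t⟫ ≤ ‖F t‖ * ‖p t‖) :
    sSup ((fun t => ‖v t‖ ^ 2 + ‖p t‖ ^ 2) '' Set.Icc 0 T)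
      ≤ 4 * (‖v 0‖ ^ 2 + ‖p 0‖ ^ 2 + (∫ t in (0 : ℝ)..T, ‖F t‖) ^ 2) := by
  set E : ℝ → ℝ := fun t => ‖v t‖ ^ 2 + ‖p t‖ ^ 2 with hE
  set M : ℝ := sSup (E '' Set.Icc 0 T) with hM
  set I : ℝ := ∫ t in (0 : ℝ)..T, ‖F t‖ with hI
  -- clamp map
  set c : ℝ → ℝ := fun s => max 0 (min s T) with hc
  have hccont : Continuous c := continuous_const.max (continuous_id.min continuous_const)
  have hcmaps : ∀ s, c s ∈ Set.Icc (0 : ℝ) T := by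
    intro s
    exact ⟨le_max_left _ _, max_le hT.le (min_le_right _ _)⟩
  have hceq : ∀ s ∈ Set.Icc (0 : ℝ) T, c s = s := by
    intro s hs
    simp only [hc, min_eq_left hs.2, max_eq_right hs.1]
  set g : ℝ → ℝ := fun s => ‖F (c s)‖ with hg
  have hgcont : Continuous g :=
    (hFc.comp_continuous hccont hcmaps).norm
  have hgnonneg : ∀ s, 0 ≤ g s := fun s => norm_nonneg _
  have hgeq : ∀ s ∈ Set.Icc (0 : ℝ) T, g s = ‖F s‖ := by
    intro s hs; simp only [hg, hceq s hs]
  set G : ℝ → ℝ := fun t => ∫ s in (0 : ℝ)..t, g s with hG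
  have hGderiv : ∀ t, HasDerivAt G (g t) t := fun t =>
    (hgcont.integral_hasStrictDerivAt 0 t).hasDerivAt
  have hGmono : Monotone G :=
    monotone_of_hasDerivAt_nonneg hGderiv hgnonneg
  have hG0 : G 0 = 0 := intervalIntegral.integral_same
  have hGT : G T = I := by
    rw [hG, hI]
    refine intervalIntegral.integral_congr ?_
    intro s hs
    rw [Set.uIcc_of_le hT.le] at hs
    exact hgeq s hs
  -- continuity of E
  have hEc : ContinuousOn E (Set.Icc 0 T) := by
    exact ((hvc.norm.pow 2).add (hpc.norm.pow 2))
  -- M bounds E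
  have hbdd : BddAbove (E '' Set.Icc 0 T) :=
    (isCompact_Icc.image_of_continuousOn hEc).bddAbove
  have hEleM : ∀ t ∈ Set.Icc (0 : ℝ) T, E t ≤ M := by
    intro t ht
    exact le_csSup hbdd ⟨t, ht, rfl⟩
  have hMnonneg : 0 ≤ M := by
    have h0 : (0 : ℝ) ∈ Set.Icc (0:ℝ) T := ⟨le_rfl, hT.le⟩
    have := hEleM 0 h0
    have hE0 : 0 ≤ E 0 := by positivity
    linarith
  set sM : ℝ := Real.sqrt M with hsM
  have hsMnonneg : 0 ≤ sM := Real.sqrt_nonneg M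
  have hsMsq : sM ^ 2 = M := Real.sq_sqrt hMnonneg
  -- p is bounded by sqrt M on Icc
  have hpbound : ∀ t ∈ Set.Icc (0 : ℝ) T, ‖p t‖ ≤ sM := by
    intro t ht
    show ‖p t‖ ≤ Real.sqrt M
    rw [Real.le_sqrt (norm_nonneg _) hMnonneg]
    have h1 : ‖p t‖ ^ 2 ≤ E t := by
      have : (0:ℝ) ≤ ‖v t‖ ^ 2 := by positivity
      simp only [hE]; linarith
    exact h1.trans (hEleM t ht)
  -- derivative of E within Icc
  have hEderiv : ∀ t ∈ Set.Icc (0 : ℝ) T,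
      HasDerivWithinAt E (2 * ⟪v t, v' t⟫ + 2 * ⟪p t, p' t⟫) (Set.Icc 0 T) t := by
    intro t ht
    exact ((hv t ht).norm_sq).add ((hp t ht).norm_sq)
  -- the function φ
  set φ : ℝ → ℝ := fun t => ‖v 0‖ ^ 2 + ‖p 0‖ ^ 2 + 2 * sM * G t - E t with hφ
  have hφmono : MonotoneOn φ (Set.Icc 0 T) := by
    have hint : interior (Set.Icc (0:ℝ) T) = Set.Ioo 0 T := interior_Icc
    refine monotoneOn_of_hasDerivWithinAt_nonneg (convex_Icc 0 T)
      (f' := fun t => 2 * sM * g t - (2 * ⟪v t, v' t⟫ + 2 * ⟪p t, p' t⟫)) ?_ ?_ ?_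
    · refine ContinuousOn.sub ?_ hEc
      have hGc : Continuous G := by
        rw [continuous_iff_continuousAt]
        exact fun t => (hGderiv t).continuousAt
      exact continuousOn_const.add (continuousOn_const.mul hGc.continuousOn)
    · intro t ht
      rw [hint] at ht
      have ht' : t ∈ Set.Icc (0:ℝ) T := Set.Ioo_subset_Icc_self ht
      have h1 : HasDerivWithinAt (fun t => ‖v 0‖ ^ 2 + ‖p 0‖ ^ 2 + 2 * sM * G t)
          (2 * sM * g t) (interior (Set.Icc 0 T)) t :=
        (((hGderiv t).hasDerivWithinAt).const_mul (2 * sM)).const_add _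
      exact h1.sub (((hEderiv t ht').mono (by rw [hint]; exact Set.Ioo_subset_Icc_self)))
    · intro t ht
      rw [hint] at ht
      have ht' : t ∈ Set.Icc (0:ℝ) T := Set.Ioo_subset_Icc_self ht
      have h1 : ⟪v' t, v t⟫ + ⟪p' t, p t⟫ ≤ ‖F t‖ * ‖p t‖ := hineq t ht'
      have h2 : ‖p t‖ ≤ sM := hpbound t ht'
      have h3 : g t = ‖F t‖ := hgeq t ht'
      have h4 : ⟪v t, v' t⟫ = ⟪v' t, v t⟫ := real_inner_comm _ _
      have h5 : ⟪p t, p' t⟫ = ⟪p' t, p t⟫ := real_inner_comm _ _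
      have h6 : (0:ℝ) ≤ ‖F t‖ := norm_nonneg _
      show (0:ℝ) ≤ 2 * sM * g t - (2 * ⟪v t, v' t⟫ + 2 * ⟪p t, p' t⟫)
      rw [h3, h4, h5]
      nlinarith [mul_le_mul_of_nonneg_left h2 h6]
  -- E t ≤ E 0 + 2 sM I for all t ∈ Icc
  have hInonneg : 0 ≤ I := by
    rw [← hGT, ← hG0]
    exact hGmono hT.le
  have key : ∀ t ∈ Set.Icc (0 : ℝ) T, E t ≤ ‖v 0‖ ^ 2 + ‖p 0‖ ^ 2 + 2 * sM * I := by
    intro t ht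
    have h0 : (0:ℝ) ∈ Set.Icc (0:ℝ) T := ⟨le_rfl, hT.le⟩
    have h1 : φ 0 ≤ φ t := hφmono h0 ht ht.1
    have hφ0 : φ 0 = 0 := by simp [hφ, hG0, hE]
    have hGt : G t ≤ I := by rw [← hGT]; exact hGmono ht.2
    have h2 : 2 * sM * G t ≤ 2 * sM * I :=
      mul_le_mul_of_nonneg_left hGt (by positivity)
    rw [hφ0] at h1
    simp only [hφ] at h1
    linarith
  -- hence M ≤ E 0 + 2 sM I
  have hMle : M ≤ ‖v 0‖ ^ 2 + ‖p 0‖ ^ 2 + 2 * sM * I := by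
    refine Real.sSup_le ?_ (by positivity)
    rintro x ⟨t, ht, rfl⟩
    exact key t ht
  -- conclude by Young's inequality
  have hE0 : (0:ℝ) ≤ ‖v 0‖ ^ 2 + ‖p 0‖ ^ 2 := by positivity
  nlinarith [sq_nonneg (sM - 2 * I), hsMsq, hsMnonneg, hInonneg, sq_nonneg sM, sq_nonneg I]
end

section
/- Let H₁ and H₂ be real inner product spaces, let T > 0, let v : ℝ → H₁ and p : ℝ → H₂ be continuous on [0, T] and differentiable on [0, T] with derivatives v'(t) and p'(t), and let F : ℝ → H₂ be continuous on [0, T]. Suppose that for every t ∈ [0, T], ⟨v'(t), v(t)⟩ + ⟨p'(t), p(t)⟩ ≤ ‖F(t)‖ · ‖p(t)‖. Then the supremum over t ∈ [0, T] of ‖v(t)‖² + ‖p(t)‖² is at most 4 · ( ‖v(0)‖² + ‖p(0)‖² + T · ∫₀ᵀ ‖F(t)‖² dt ). -/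
open RealInnerProductSpace Set MeasureTheory

/-! On `[0, T]` the energy `E = ‖v‖² + ‖p‖²` has `E' ≤ 2 ‖F‖ ‖p‖ ≤ 2 ‖F‖ √S`, where `S` is the
supremum of `E`. Integrating gives `S ≤ E 0 + 2 √S ∫ ‖F‖`; absorbing the last term yields
`S ≤ 2 E 0 + 4 (∫ ‖F‖)²`, and Cauchy–Schwarz gives `(∫ ‖F‖)² ≤ T ∫ ‖F‖²`. -/

theorem sq_intervalIntegral_le_mul_intervalIntegral_sq {f : ℝ → ℝ} {a b : ℝ}
    (hf : IntervalIntegrable f volume a b) (hf2 : IntervalIntegrable (fun x => f x ^ 2) volume a b) :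
    (∫ x in a..b, f x) ^ 2 ≤ (b - a) * ∫ x in a..b, f x ^ 2 := by
  wlog hab : a ≤ b generalizing a b
  · have h := this hf.symm hf2.symm (le_of_not_ge hab)
    rw [intervalIntegral.integral_symm a b,
      intervalIntegral.integral_symm a b (f := fun x => f x ^ 2)] at h
    linarith
  -- `c ↦ ∫ (f - c)²` is a nonnegative quadratic, so its discriminant is nonpositive.
  have hquad : ∀ c : ℝ, 0 ≤ (b - a) * (c * c) + (-2 * ∫ x in a..b, f x) * c
      + ∫ x in a..b, f x ^ 2 := by
    intro c
    have h := intervalIntegral.integral_nonneg (μ := volume) hab fun x _ => sq_nonneg (f x - c)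
    have hexp : (fun x => (f x - c) ^ 2) = fun x => f x ^ 2 - 2 * c * f x + c ^ 2 := by
      funext x; ring
    rw [hexp, intervalIntegral.integral_add (hf2.sub (hf.const_mul _)) intervalIntegrable_const,
      intervalIntegral.integral_sub hf2 (hf.const_mul _), intervalIntegral.integral_const_mul,
      intervalIntegral.integral_const, smul_eq_mul] at h
    linarith
  have := discrim_le_zero hquad
  rw [discrim] at this
  linarith

theorem le_add_integral_of_hasDerivWithinAt_le {E E' φ : ℝ → ℝ} {a b : ℝ}
    (hE : ContinuousOn E (Icc a b)) (hE' : ∀ x ∈ Ioo a b, HasDerivWithinAt E (E' x) (Ioi x) x)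
    (hφ : IntegrableOn φ (Icc a b)) (hφ0 : ∀ x ∈ Icc a b, 0 ≤ φ x)
    (hE'φ : ∀ x ∈ Ioo a b, E' x ≤ φ x) {t : ℝ} (ht : t ∈ Icc a b) :
    E t ≤ E a + ∫ x in a..b, φ x := by
  have hsub : Icc a t ⊆ Icc a b := Icc_subset_Icc_right ht.2
  have hEt : E t - E a ≤ ∫ x in a..t, φ x :=
    intervalIntegral.sub_le_integral_of_hasDeriv_right_of_le ht.1 (hE.mono hsub)
      (fun x hx => hE' x (Ioo_subset_Ioo_right ht.2 hx)) (hφ.mono_set hsub)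
      (fun x hx => hE'φ x (Ioo_subset_Ioo_right ht.2 hx))
  have hmono : ∫ x in a..t, φ x ≤ ∫ x in a..b, φ x :=
    intervalIntegral.integral_mono_interval le_rfl ht.1 ht.2
      ((ae_restrict_mem measurableSet_Ioc).mono fun x hx => hφ0 x (Ioc_subset_Icc_self hx))
      ((intervalIntegrable_iff_integrableOn_Icc_of_le (ht.1.trans ht.2)).2 hφ)
  linarith

theorem norm_sq_add_norm_sq_le_of_inner_deriv_le
    {H₁ H₂ : Type*} [NormedAddCommGroup H₁] [InnerProductSpace ℝ H₁]
    [NormedAddCommGroup H₂] [InnerProductSpace ℝ H₂] {a b M : ℝ}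
    {v : ℝ → H₁} {p : ℝ → H₂} {v' : ℝ → H₁} {p' F : ℝ → H₂}
    (hvc : ContinuousOn v (Icc a b)) (hpc : ContinuousOn p (Icc a b))
    (hv : ∀ t ∈ Icc a b, HasDerivWithinAt v (v' t) (Icc a b) t)
    (hp : ∀ t ∈ Icc a b, HasDerivWithinAt p (p' t) (Icc a b) t)
    (hFc : ContinuousOn F (Icc a b))
    (hineq : ∀ t ∈ Icc a b, ⟪v' t, v t⟫ + ⟪p' t, p t⟫ ≤ ‖F t‖ * ‖p t‖)
    (hpM : ∀ t ∈ Icc a b, ‖p t‖ ≤ M) {t : ℝ} (ht : t ∈ Icc a b) :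
    ‖v t‖ ^ 2 + ‖p t‖ ^ 2 ≤ ‖v a‖ ^ 2 + ‖p a‖ ^ 2 + 2 * M * ∫ s in a..b, ‖F s‖ := by
  have hM : 0 ≤ M := (norm_nonneg _).trans (hpM t ht)
  rw [← intervalIntegral.integral_const_mul]
  refine le_add_integral_of_hasDerivWithinAt_le (E := fun t => ‖v t‖ ^ 2 + ‖p t‖ ^ 2)
    (E' := fun x => 2 * ⟪v x, v' x⟫ + 2 * ⟪p x, p' x⟫) (φ := fun x => 2 * M * ‖F x‖)
    ((hvc.norm.pow 2).add (hpc.norm.pow 2)) (fun x hx => ?_)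
    (continuousOn_const.mul hFc.norm).integrableOn_Icc (fun x _ => by positivity)
    (fun x hx => ?_) ht
  · have hnhds : Icc a b ∈ nhds x := Icc_mem_nhds hx.1 hx.2
    exact (((hv x (Ioo_subset_Icc_self hx)).hasDerivAt hnhds).norm_sq.add
      ((hp x (Ioo_subset_Icc_self hx)).hasDerivAt hnhds).norm_sq).hasDerivWithinAt
  · have hxI := Ioo_subset_Icc_self hx
    have hFpM := mul_le_mul_of_nonneg_left (hpM x hxI) (norm_nonneg (F x))
    rw [real_inner_comm (v' x), real_inner_comm (p' x)]
    linarith [hineq x hxI]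

/-- Stability estimate with the L²-in-time norm of the source: if
`⟪v', v⟫ + ⟪p', p⟫ ≤ ‖F t‖ ‖p t‖` on `[0, T]`, then
`sup_{[0,T]} (‖v‖² + ‖p‖²) ≤ 4 (‖v 0‖² + ‖p 0‖² + T ∫₀ᵀ ‖F‖²)`. -/
theorem stmt_5
    {H₁ H₂ : Type*} [NormedAddCommGroup H₁] [InnerProductSpace ℝ H₁]
    [NormedAddCommGroup H₂] [InnerProductSpace ℝ H₂]
    (T : ℝ) (hT : 0 < T)
    (v : ℝ → H₁) (p : ℝ → H₂) (v' : ℝ → H₁) (p' : ℝ → H₂) (F : ℝ → H₂)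
    (hvc : ContinuousOn v (Set.Icc 0 T)) (hpc : ContinuousOn p (Set.Icc 0 T))
    (hv : ∀ t ∈ Set.Icc (0 : ℝ) T, HasDerivWithinAt v (v' t) (Set.Icc 0 T) t)
    (hp : ∀ t ∈ Set.Icc (0 : ℝ) T, HasDerivWithinAt p (p' t) (Set.Icc 0 T) t)
    (hFc : ContinuousOn F (Set.Icc 0 T))
    (hineq : ∀ t ∈ Set.Icc (0 : ℝ) T,
      ⟪v' t, v t⟫ + ⟪p' t, p t⟫ ≤ ‖F t‖ * ‖p t‖) :
    sSup ((fun t => ‖v t‖ ^ 2 + ‖p t‖ ^ 2) '' Set.Icc 0 T)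
      ≤ 4 * (‖v 0‖ ^ 2 + ‖p 0‖ ^ 2 + T * ∫ t in (0 : ℝ)..T, ‖F t‖ ^ 2) := by
  set S := sSup ((fun t => ‖v t‖ ^ 2 + ‖p t‖ ^ 2) '' Icc 0 T)
  set I := ∫ t in (0 : ℝ)..T, ‖F t‖
  have hES : ∀ t ∈ Icc 0 T, ‖v t‖ ^ 2 + ‖p t‖ ^ 2 ≤ S := fun t ht =>
    le_csSup (isCompact_Icc.image_of_continuousOn ((hvc.norm.pow 2).add (hpc.norm.pow 2))).bddAbove
      ⟨t, ht, rfl⟩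
  have hpS : ∀ t ∈ Icc 0 T, ‖p t‖ ≤ √S := fun t ht =>
    Real.le_sqrt_of_sq_le (by linarith [hES t ht, sq_nonneg ‖v t‖])
  have hSI : S ≤ ‖v 0‖ ^ 2 + ‖p 0‖ ^ 2 + 2 * √S * I :=
    csSup_le ((nonempty_Icc.2 hT.le).image _) <| forall_mem_image.2 fun t ht =>
      norm_sq_add_norm_sq_le_of_inner_deriv_le hvc hpc hv hp hFc hineq hpS ht
  have hI : I ^ 2 ≤ T * ∫ t in (0 : ℝ)..T, ‖F t‖ ^ 2 := by
    simpa using sq_intervalIntegral_le_mul_intervalIntegral_sq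
      (hFc.norm.intervalIntegrable_of_Icc hT.le) ((hFc.norm.pow 2).intervalIntegrable_of_Icc hT.le)
  have hS : √S ^ 2 = S :=
    Real.sq_sqrt ((add_nonneg (sq_nonneg _) (sq_nonneg _)).trans (hES 0 (left_mem_Icc.2 hT.le)))
  -- absorb `2 √S I ≤ S / 2 + 2 I²` into the left-hand side
  nlinarith [sq_nonneg (√S - 2 * I), sq_nonneg ‖v 0‖, sq_nonneg ‖p 0‖]
end

section
/- Let M ∈ ℕ, let M_v and M_p be symmetric real M × M matrices, let R be a real M × M matrix, and let v, p : ℝ → ℝᴹ be differentiable functions with derivatives v'(t) and p'(t) satisfying, for all t, the semi-discrete system M_v · v'(t) = R · p(t) and M_p · p'(t) = − Rᵀ · v(t). Then the discrete energy t ↦ v(t)ᵀ M_v v(t) + p(t)ᵀ M_p p(t) is constant in t. -/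
/-!
Differentiating a quadratic form `u ⬝ᵥ A *ᵥ u` with `A` symmetric gives `2 u ⬝ᵥ A *ᵥ u'`. Along the
system this turns the derivative of the energy into `2 v ⬝ᵥ R *ᵥ p - 2 p ⬝ᵥ Rᵀ *ᵥ v`, and the two
terms are the same bilinear expression read through the transpose, so the energy is constant.
-/

open Matrix

section Calculus

variable {𝕜 ι m : Type*} [NontriviallyNormedField 𝕜] [Fintype ι]
  {u w : 𝕜 → ι → 𝕜} {u' w' : ι → 𝕜} {t : 𝕜}

theorem HasDerivAt.dotProduct (hu : HasDerivAt u u' t) (hw : HasDerivAt w w' t) :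
    HasDerivAt (fun s => u s ⬝ᵥ w s) (u' ⬝ᵥ w t + u t ⬝ᵥ w') t := by
  simp only [_root_.dotProduct, ← Finset.sum_add_distrib]
  exact HasDerivAt.fun_sum fun i _ =>
    (hasDerivAt_pi.1 hu i).mul (hasDerivAt_pi.1 hw i)

theorem HasDerivAt.mulVec (A : Matrix m ι 𝕜) (hu : HasDerivAt u u' t) :
    HasDerivAt (fun s => A *ᵥ u s) (A *ᵥ u') t :=
  hasDerivAt_pi.2 fun i => by
    simpa [Matrix.mulVec] using (hasDerivAt_const t (A i)).dotProduct hu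

theorem HasDerivAt.dotProduct_mulVec_self {A : Matrix ι ι 𝕜} (hA : A.IsSymm)
    (hu : HasDerivAt u u' t) :
    HasDerivAt (fun s => u s ⬝ᵥ A *ᵥ u s) (2 * (u t ⬝ᵥ A *ᵥ u')) t :=
  (hu.dotProduct (hu.mulVec A)).congr_deriv <| by
    rw [← dotProduct_transpose_mulVec, hA.eq, two_mul]

end Calculus

/-- Energy conservation for the source-free semi-discrete matrix system
`M_v v' = R p`, `M_p p' = −Rᵀ v` with symmetric mass matrices: the discrete
energy `vᵀ M_v v + pᵀ M_p p` is constant in time. -/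
theorem stmt_9
    (M : ℕ) (Mv Mp R : Matrix (Fin M) (Fin M) ℝ)
    (hMv : Mv.IsSymm) (hMp : Mp.IsSymm)
    (v p v' p' : ℝ → Fin M → ℝ)
    (hv : ∀ t : ℝ, HasDerivAt v (v' t) t)
    (hp : ∀ t : ℝ, HasDerivAt p (p' t) t)
    (h1 : ∀ t : ℝ, Mv.mulVec (v' t) = R.mulVec (p t))
    (h2 : ∀ t : ℝ, Mp.mulVec (p' t) = -(Rᵀ.mulVec (v t))) :
    ∀ s t : ℝ,
      v s ⬝ᵥ Mv.mulVec (v s) + p s ⬝ᵥ Mp.mulVec (p s)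
        = v t ⬝ᵥ Mv.mulVec (v t) + p t ⬝ᵥ Mp.mulVec (p t) := by
  have energy_deriv : ∀ t, HasDerivAt
      (fun s => v s ⬝ᵥ Mv *ᵥ v s + p s ⬝ᵥ Mp *ᵥ p s) 0 t := by
    intro t
    refine (((hv t).dotProduct_mulVec_self hMv).add
      ((hp t).dotProduct_mulVec_self hMp)).congr_deriv ?_
    rw [h1, h2, dotProduct_neg, dotProduct_transpose_mulVec]
    ring
  exact is_const_of_deriv_eq_zero (fun t => (energy_deriv t).differentiableAt)
    fun t => (energy_deriv t).deriv
end
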